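/- arXiv:2305.05720 — 2 statements merged into one kernel-verified Lean document; each statement's English description precedes it below -/
import Mathlib

section
/- Let Ω = Ω₁ × Ω₂ with dim Ω₂ = j ≥ 3. Then there exists a constant C_j, depending only on j, such that for every u ∈ H¹_s(Ω) and every x = (x₁, x₂) ∈ Ω, |u(x)| ≤ (C_j / ‖x₂‖^{(j−2)/2}) · (∫_{Ω₂} |∇u(x₁, y)|² dy)^{1/2}. -/
open MeasureTheory Metric Bornology Set

noncomputable section

/-- `E n` is Euclidean space `ℝ^n`. -/
abbrev E (n : ℕ) : Type := EuclideanSpace ℝ (Fin n)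

/-!
Write `x₂ = r ω` with `‖ω‖ = 1`. Along the ray `s ↦ (x₁, s ω)` the function `u` vanishes at
`s = R`, so `|u(x)| ≤ ∫_r^R |∇u(x₁, s ω)| ds`, and Cauchy–Schwarz with the weights `s^((1-j)/2)`
and `s^((j-1)/2)` bounds this by `(∫_r^∞ s^(1-j) ds)^(1/2) = (r^(2-j)/(j-2))^(1/2)` times
`(∫ s^(j-1) |∇u(x₁, s ω)|² ds)^(1/2)`. Reflections of `ℝ^j` preserve `u`, hence `|∇u(x₁, ·)|` is
radial too, and polar coordinates identify `j |B₁| ∫ s^(j-1) |∇u(x₁, s ω)|² ds` with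
`∫_{Ω₂} |∇u(x₁, y)|² dy`.
-/

def LinearIsometryEquiv.prodCongr {R E₁ E₂ E₃ E₄ : Type*} [Semiring R]
    [SeminormedAddCommGroup E₁] [SeminormedAddCommGroup E₂] [SeminormedAddCommGroup E₃]
    [SeminormedAddCommGroup E₄] [Module R E₁] [Module R E₂] [Module R E₃] [Module R E₄]
    (e : E₁ ≃ₗᵢ[R] E₂) (e' : E₃ ≃ₗᵢ[R] E₄) : E₁ × E₃ ≃ₗᵢ[R] E₂ × E₄ where
  toLinearEquiv := e.toLinearEquiv.prodCongr e'.toLinearEquiv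
  norm_map' p := by simp [Prod.norm_def]

theorem norm_fderiv_eq_of_norm_eq {F W G : Type*} [NormedAddCommGroup F] [NormedSpace ℝ F]
    [NormedAddCommGroup W] [InnerProductSpace ℝ W] [NormedAddCommGroup G] [NormedSpace ℝ G]
    {u : F × W → G} (hrad : ∀ x₁ (y z : W), ‖y‖ = ‖z‖ → u (x₁, y) = u (x₁, z))
    (x₁ : F) {y z : W} (hyz : ‖y‖ = ‖z‖) :
    ‖fderiv ℝ u (x₁, y)‖ = ‖fderiv ℝ u (x₁, z)‖ := by
  set Q := Submodule.reflection (ℝ ∙ (y - z))ᗮ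
  set T := (LinearIsometryEquiv.refl ℝ F).prodCongr Q
  have huT : u ∘ T.toContinuousLinearEquiv = u :=
    funext fun p => hrad p.1 (Q p.2) p.2 (Q.norm_map p.2)
  have hTy : T (x₁, y) = (x₁, z) := Prod.ext rfl (Submodule.reflection_sub hyz)
  have hchain := T.toContinuousLinearEquiv.comp_right_fderiv (f := u) (x := (x₁, y))
  rw [huT] at hchain
  rw [hchain]
  exact (ContinuousLinearMap.opNorm_comp_linearIsometryEquiv _ T).trans (by rw [← hTy]; rfl)

theorem integral_eq_integral_Ioi_of_norm_eq {W G : Type*} [NormedAddCommGroup W]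
    [NormedSpace ℝ W] [FiniteDimensional ℝ W] [MeasurableSpace W] [BorelSpace W]
    (μ : Measure W) [μ.IsAddHaarMeasure] [NormedAddCommGroup G] [NormedSpace ℝ G] {f : W → G}
    (hf : ∀ y z, ‖y‖ = ‖z‖ → f y = f z) {ω : W} (hω : ‖ω‖ = 1) :
    ∫ y, f y ∂μ = Module.finrank ℝ W • μ.real (ball 0 1) •
      ∫ s in Ioi (0 : ℝ), s ^ (Module.finrank ℝ W - 1) • f (s • ω) := by
  have : Nontrivial W := nontrivial_of_ne ω 0 (by rintro rfl; simp at hω)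
  have hf_norm : f = fun y => f (‖y‖ • ω) :=
    funext fun y => hf _ _ (by rw [norm_smul, hω, mul_one, norm_norm])
  conv_lhs => rw [hf_norm]
  exact integral_fun_norm_addHaar μ fun s => f (s • ω)

theorem integral_Ioc_rpow_le_of_lt {a r R : ℝ} (ha : a < -1) (hr : 0 < r) :
    ∫ s in Ioc r R, s ^ a ≤ -r ^ (a + 1) / (a + 1) := by
  rw [← integral_Ioi_rpow_of_lt ha hr]
  refine setIntegral_mono_set (integrableOn_Ioi_rpow_of_lt ha hr) ?_
    Ioc_subset_Ioi_self.eventuallyLE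
  filter_upwards [ae_restrict_mem measurableSet_Ioi] with s hs
  exact Real.rpow_nonneg (hr.trans hs).le a

theorem integral_mul_le_sqrt_mul_sqrt_of_continuousOn {a b : ℝ} {f h : ℝ → ℝ}
    (hf : ContinuousOn f (Icc a b)) (hh : ContinuousOn h (Icc a b))
    (hf₀ : ∀ s ∈ Ioc a b, 0 ≤ f s) (hh₀ : ∀ s ∈ Ioc a b, 0 ≤ h s) :
    ∫ s in Ioc a b, f s * h s ≤ √(∫ s in Ioc a b, f s ^ 2) * √(∫ s in Ioc a b, h s ^ 2) := by
  have memLp_two {k : ℝ → ℝ} (hk : ContinuousOn k (Icc a b)) :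
      MemLp k (ENNReal.ofReal 2) (volume.restrict (Ioc a b)) := by
    rw [ENNReal.ofReal_ofNat, memLp_two_iff_integrable_sq
      (hk.integrableOn_Icc.mono_set Ioc_subset_Icc_self).aestronglyMeasurable]
    exact (hk.pow 2).integrableOn_Icc.mono_set Ioc_subset_Icc_self
  have := integral_mul_le_Lp_mul_Lq_of_nonneg Real.HolderConjugate.two_two
    (ae_restrict_of_forall_mem measurableSet_Ioc hf₀)
    (ae_restrict_of_forall_mem measurableSet_Ioc hh₀) (memLp_two hf) (memLp_two hh)
  simpa only [Real.rpow_two, Real.sqrt_eq_rpow] using this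

theorem abs_le_sqrt_mul_sqrt_integral_rpow_mul_sq {p r R : ℝ} {g g' : ℝ → ℝ} (hp : 2 < p)
    (hr : 0 < r) (hrR : r ≤ R) (hg : ∀ s ∈ Icc r R, HasDerivAt g (g' s) s)
    (hg' : ContinuousOn g' (Icc r R)) (hgR : g R = 0) :
    |g r| ≤ √(r ^ (2 - p) / (p - 2)) * √(∫ s in Ioc r R, s ^ (p - 1) * g' s ^ 2) := by
  have hpos : ∀ s ∈ Ioc r R, 0 < s := fun s hs => hr.trans hs.1
  have hweight : ContinuousOn (fun s : ℝ => s ^ ((1 - p) / 2)) (Icc r R) := fun s hs =>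
    (Real.continuousAt_rpow_const s _ (Or.inl (hr.trans_le hs.1).ne')).continuousWithinAt
  have hweight' : ContinuousOn (fun s : ℝ => s ^ ((p - 1) / 2)) (Icc r R) :=
    (Real.continuous_rpow_const (by linarith)).continuousOn
  have hftc : ∫ s in r..R, g' s = g R - g r := intervalIntegral.integral_eq_sub_of_hasDerivAt
    (by rwa [uIcc_of_le hrR]) (hg'.intervalIntegrable_of_Icc hrR)
  calc |g r| = |∫ s in r..R, g' s| := by rw [hftc, hgR, zero_sub, abs_neg]
    _ ≤ ∫ s in Ioc r R, |g' s| := by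
      rw [← intervalIntegral.integral_of_le hrR]
      exact intervalIntegral.abs_integral_le_integral_abs hrR
    _ = ∫ s in Ioc r R, s ^ ((1 - p) / 2) * (s ^ ((p - 1) / 2) * |g' s|) := by
      refine setIntegral_congr_fun measurableSet_Ioc fun s hs => ?_
      rw [← mul_assoc, ← Real.rpow_add (hpos s hs), show (1 - p) / 2 + (p - 1) / 2 = 0 by ring,
        Real.rpow_zero, one_mul]
    _ ≤ √(∫ s in Ioc r R, (s ^ ((1 - p) / 2)) ^ 2) *
          √(∫ s in Ioc r R, (s ^ ((p - 1) / 2) * |g' s|) ^ 2) :=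
      integral_mul_le_sqrt_mul_sqrt_of_continuousOn hweight (hweight'.mul hg'.abs)
        (fun s hs => Real.rpow_nonneg (hpos s hs).le _)
        (fun s hs => mul_nonneg (Real.rpow_nonneg (hpos s hs).le _) (abs_nonneg _))
    _ = √(∫ s in Ioc r R, s ^ (1 - p)) * √(∫ s in Ioc r R, s ^ (p - 1) * g' s ^ 2) := by
      congr 2 <;> refine setIntegral_congr_fun measurableSet_Ioc fun s hs => ?_ <;>
        simp only [mul_pow, sq_abs, ← Real.rpow_natCast, ← Real.rpow_mul (hpos s hs).le] <;>
        ring_nf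
    _ ≤ √(r ^ (2 - p) / (p - 2)) * √(∫ s in Ioc r R, s ^ (p - 1) * g' s ^ 2) := by
      gcongr
      refine (integral_Ioc_rpow_le_of_lt (R := R) (by linarith : 1 - p < -1) hr).trans_eq ?_
      rw [show 1 - p + 1 = -(p - 2) by ring, show 2 - p = -(p - 2) by ring, neg_div_neg_eq]

theorem abs_apply_add_smul_le {V : Type*} [NormedAddCommGroup V] [NormedSpace ℝ V] {v : V → ℝ}
    (hv : ContDiff ℝ 1 v) {x d : V} (hd : ‖d‖ ≤ 1) {p r R : ℝ} (hp : 2 < p) (hr : 0 < r)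
    (hrR : r ≤ R) (hR : v (x + R • d) = 0) :
    |v (x + r • d)| ≤ √(r ^ (2 - p) / (p - 2)) *
      √(∫ s in Ioc r R, s ^ (p - 1) * ‖fderiv ℝ v (x + s • d)‖ ^ 2) := by
  have hDv : Continuous fun s : ℝ => fderiv ℝ v (x + s • d) :=
    (hv.continuous_fderiv one_ne_zero).comp (by fun_prop)
  have hweight : ContinuousOn (fun s : ℝ => s ^ (p - 1)) (Icc r R) :=
    (Real.continuous_rpow_const (by linarith)).continuousOn
  refine (abs_le_sqrt_mul_sqrt_integral_rpow_mul_sq hp hr hrR (g := fun s => v (x + s • d))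
    (g' := fun s => fderiv ℝ v (x + s • d) d) (fun s _ => ?_)
    (hDv.clm_apply continuous_const).continuousOn hR).trans ?_
  · exact (hv.differentiable one_ne_zero _).hasFDerivAt.comp_hasDerivAt s
      ((hasDerivAt_id s).smul_const d |>.const_add x |>.congr_deriv (one_smul ℝ d))
  refine mul_le_mul_of_nonneg_left (Real.sqrt_le_sqrt ?_) (Real.sqrt_nonneg _)
  refine setIntegral_mono_on ?_ ?_ measurableSet_Ioc fun s hs => ?_
  · exact (hweight.mul ((hDv.clm_apply continuous_const).pow 2).continuousOn).integrableOn_Icc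
      |>.mono_set Ioc_subset_Icc_self
  · exact (hweight.mul (hDv.norm.pow 2).continuousOn).integrableOn_Icc.mono_set
      Ioc_subset_Icc_self
  · have hbound : |fderiv ℝ v (x + s • d) d| ≤ ‖fderiv ℝ v (x + s • d)‖ :=
      ((fderiv ℝ v (x + s • d)).le_opNorm d).trans (mul_le_of_le_one_right (norm_nonneg _) hd)
    exact mul_le_mul_of_nonneg_left (sq_le_sq.mpr (hbound.trans (le_abs_self _)))
      (Real.rpow_nonneg (hr.trans hs.1).le _)

section RadialInSecondVariable

variable {F W G : Type*} [NormedAddCommGroup F] [NormedSpace ℝ F] [NormedAddCommGroup W]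
  [InnerProductSpace ℝ W] [FiniteDimensional ℝ W] [MeasurableSpace W] [BorelSpace W]
  (μ : Measure W) [μ.IsAddHaarMeasure]

theorem integral_Ioc_le_integral_ball_norm_fderiv_sq [NormedAddCommGroup G] [NormedSpace ℝ G]
    {u : F × W → G} (hu : ContDiff ℝ 1 u)
    (hrad : ∀ x₁ (y z : W), ‖y‖ = ‖z‖ → u (x₁, y) = u (x₁, z)) {R : ℝ}
    (hsupp : tsupport u ⊆ univ ×ˢ ball 0 R) (x₁ : F) {ω : W} (hω : ‖ω‖ = 1) {r : ℝ}
    (hr : 0 ≤ r) :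
    Module.finrank ℝ W * μ.real (ball 0 1) *
        ∫ s in Ioc r R, s ^ ((Module.finrank ℝ W : ℝ) - 1) * ‖fderiv ℝ u (x₁, s • ω)‖ ^ 2 ≤
      ∫ y in ball 0 R, ‖fderiv ℝ u (x₁, y)‖ ^ 2 ∂μ := by
  set n := Module.finrank ℝ W
  have : Nontrivial W := nontrivial_of_ne ω 0 (by rintro rfl; simp at hω)
  have hvanish : ∀ y : W, R ≤ ‖y‖ → fderiv ℝ u (x₁, y) = 0 := fun y hy =>
    fderiv_of_notMem_tsupport ℝ fun h => (mem_ball_zero_iff.mp (hsupp h).2).not_ge hy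
  have hball : ∫ y in ball 0 R, ‖fderiv ℝ u (x₁, y)‖ ^ 2 ∂μ =
      ∫ y, ‖fderiv ℝ u (x₁, y)‖ ^ 2 ∂μ :=
    setIntegral_eq_integral_of_forall_compl_eq_zero fun y hy => by
      rw [hvanish y (not_lt.mp (mt mem_ball_zero_iff.mpr hy)), ContinuousLinearMap.opNorm_zero]
      norm_num
  set Φ : ℝ → ℝ := fun s => s ^ (n - 1) * ‖fderiv ℝ u (x₁, s • ω)‖ ^ 2
  have hΦ : Integrable Φ := by
    refine ((continuous_pow _).mul (((hu.continuous_fderiv one_ne_zero).comp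
      (by fun_prop)).norm.pow 2)).integrable_of_hasCompactSupport ?_
    refine HasCompactSupport.intro (isCompact_closedBall 0 R) fun s hs => ?_
    have hR : R ≤ ‖s • ω‖ := by
      rw [norm_smul, hω, mul_one]
      exact (lt_of_not_ge (mt mem_closedBall_zero_iff.mpr hs)).le
    simp [hvanish _ hR]
  rw [hball, integral_eq_integral_Ioi_of_norm_eq μ
    (fun y z h => by rw [norm_fderiv_eq_of_norm_eq hrad x₁ h]) hω, nsmul_eq_mul, smul_eq_mul,
    mul_assoc]
  refine mul_le_mul_of_nonneg_left (mul_le_mul_of_nonneg_left ?_ measureReal_nonneg)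
    n.cast_nonneg
  calc ∫ s in Ioc r R, s ^ ((n : ℝ) - 1) * ‖fderiv ℝ u (x₁, s • ω)‖ ^ 2
      = ∫ s in Ioc r R, Φ s := setIntegral_congr_fun measurableSet_Ioc fun s hs => by
        rw [← Nat.cast_one, ← Nat.cast_sub Module.finrank_pos, Real.rpow_natCast]
    _ ≤ ∫ s in Ioi 0, Φ s :=
      setIntegral_mono_set hΦ.integrableOn (ae_restrict_of_forall_mem measurableSet_Ioi
        fun s hs => mul_nonneg (pow_nonneg (le_of_lt hs) _) (sq_nonneg _))
        (Ioc_subset_Ioi_self.trans (Ioi_subset_Ioi hr)).eventuallyLE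

theorem abs_le_sqrt_mul_sqrt_integral_ball_norm_fderiv_sq {u : F × W → ℝ} (hu : ContDiff ℝ 1 u)
    (hrad : ∀ x₁ (y z : W), ‖y‖ = ‖z‖ → u (x₁, y) = u (x₁, z)) {R : ℝ}
    (hsupp : tsupport u ⊆ univ ×ˢ ball 0 R) (hn : 2 < Module.finrank ℝ W) (x₁ : F) {x₂ : W}
    (hx₂ : x₂ ≠ 0) (hx₂R : ‖x₂‖ ≤ R) :
    |u (x₁, x₂)| ≤ √(‖x₂‖ ^ (2 - (Module.finrank ℝ W : ℝ)) / (Module.finrank ℝ W - 2)) *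
      √((∫ y in ball 0 R, ‖fderiv ℝ u (x₁, y)‖ ^ 2 ∂μ) /
        (Module.finrank ℝ W * μ.real (ball 0 1))) := by
  set n := Module.finrank ℝ W
  set r := ‖x₂‖
  have hr : 0 < r := norm_pos_iff.mpr hx₂
  set ω := r⁻¹ • x₂
  have hω : ‖ω‖ = 1 := norm_smul_inv_norm hx₂
  have hline (s : ℝ) : ((x₁, 0) : F × W) + s • ((0 : F), ω) = (x₁, s • ω) := by simp
  have hvanish : u (x₁, R • ω) = 0 := image_eq_zero_of_notMem_tsupport fun h => by
    simpa [norm_smul, hω, abs_of_pos (hr.trans_le hx₂R)] using (hsupp h).2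
  have hslice := abs_apply_add_smul_le hu (x := (x₁, 0)) (d := (0, ω)) (by simp [hω])
    (p := n) (by exact_mod_cast hn) hr hx₂R (by rwa [hline])
  have hx₂ω : r • ω = x₂ := smul_inv_smul₀ hr.ne' x₂
  simp only [hline, hx₂ω] at hslice
  refine hslice.trans (mul_le_mul_of_nonneg_left (Real.sqrt_le_sqrt ?_) (Real.sqrt_nonneg _))
  have hV : 0 < μ.real (ball 0 1) :=
    ENNReal.toReal_pos (measure_ball_pos μ _ one_pos).ne' measure_ball_lt_top.ne
  have : (0 : ℝ) < n := by exact_mod_cast (by omega : 0 < n)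
  rw [le_div_iff₀ (by positivity), mul_comm]
  exact integral_Ioc_le_integral_ball_norm_fderiv_sq μ hu hrad hsupp x₁ hω hr.le

end RadialInSecondVariable

/-- Wang's pointwise estimate for functions radially symmetric in the second
variable, case `dim Ω₂ = j ≥ 3`. Membership in `H¹_s(Ω)` is expressed for the dense
class of `C¹` functions with compact support contained in `Ω = Ω₁ × Ω₂`. -/
theorem wang_pointwise_estimate_j_ge_three (m j : ℕ) (hj : 3 ≤ j) :
    ∃ C > 0, ∀ (Ω₁ : Set (E m)), IsOpen Ω₁ → IsBounded Ω₁ →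
      ∀ R : ℝ, 0 < R →
      ∀ u : E m × E j → ℝ,
        ContDiff ℝ 1 u → HasCompactSupport u →
        tsupport u ⊆ Ω₁ ×ˢ ball (0 : E j) R →
        (∀ (x₁ : E m) (x₂ y₂ : E j), ‖x₂‖ = ‖y₂‖ → u (x₁, x₂) = u (x₁, y₂)) →
        ∀ (x₁ : E m) (x₂ : E j), (x₁, x₂) ∈ Ω₁ ×ˢ ball (0 : E j) R → x₂ ≠ 0 →
          |u (x₁, x₂)| ≤ C / ‖x₂‖ ^ (((j : ℝ) - 2) / 2) *
            (∫ y in ball (0 : E j) R, ‖fderiv ℝ u (x₁, y)‖ ^ 2) ^ ((1 : ℝ) / 2) := by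
  set V := volume.real (ball (0 : E j) 1) with hV_def
  have hV : 0 < V :=
    ENNReal.toReal_pos (measure_ball_pos volume _ one_pos).ne' measure_ball_lt_top.ne
  have hj2 : (0 : ℝ) < j - 2 := by
    have : (3 : ℝ) ≤ j := by exact_mod_cast hj
    linarith
  refine ⟨(√((j - 2) * (j * V)))⁻¹, by positivity, ?_⟩
  intro Ω₁ _ _ R _ u hu _ hsupp hrad x₁ x₂ hx hx₂
  have hest := abs_le_sqrt_mul_sqrt_integral_ball_norm_fderiv_sq volume hu hrad
    (hsupp.trans (prod_mono (subset_univ _) le_rfl)) (by rw [finrank_euclideanSpace_fin]; omega)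
    x₁ hx₂ (mem_ball_zero_iff.mp hx.2).le
  rw [finrank_euclideanSpace_fin, ← hV_def] at hest
  refine hest.trans_eq ?_
  have hr : 0 < ‖x₂‖ := norm_pos_iff.mpr hx₂
  rw [← Real.sqrt_eq_rpow, Real.sqrt_div (by positivity), Real.sqrt_div' _ (by positivity),
    Real.sqrt_mul hj2.le, Real.sqrt_eq_rpow (‖x₂‖ ^ _), ← Real.rpow_mul hr.le,
    show (2 - (j : ℝ)) * (1 / 2) = -((j - 2) / 2) by ring, Real.rpow_neg hr.le]
  field_simp
end
end

section
/- Let Ω = Ω₁ × Ω₂ with dim Ω₂ = j = 2. Then there exists a constant A_j such that for every u ∈ H¹₀(Ω) radially symmetric in the second variable and every x = (x₁, x₂) ∈ Ω, |u(x)| ≤ (A_j / ‖x₂‖^{j−1}) ∫_{Ω₂} |∇u(x₁, y)| dy. -/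
/-!
Fix `x₁` and write `v = u(x₁, ·)` and `r = ‖x₂‖`. For every `b ∈ [-r, r]` the line
`t ↦ (b, t)` meets the circle of radius `r`, where the radial function `v` equals `v(x₂)`;
integrating `∂ₜv` from there to infinity gives `|v(x₂)| ≤ ∫ |∇v(b, t)| dt`. Integrating this over
`b ∈ [-r, r]` and applying Fubini yields `2r |v(x₂)| ≤ ∫ |∇v|`, and `|∇v| ≤ |∇u(x₁, ·)|`
vanishes outside `Ω₂`. So `A = 1/2` works.
-/

open MeasureTheory Metric Bornology

noncomputable section

theorem abs_le_integral_abs_deriv {φ : ℝ → ℝ} (hφ : ContDiff ℝ 1 φ)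
    (hcs : HasCompactSupport φ) (s : ℝ) : |φ s| ≤ ∫ t, |deriv φ t| := by
  have hint : Integrable (deriv φ) :=
    (hφ.continuous_deriv le_rfl).integrable_of_hasCompactSupport hcs.deriv
  calc |φ s| = |∫ t in Set.Ioi s, deriv φ t| := by
        rw [hcs.integral_Ioi_deriv_eq hφ, abs_neg]
    _ ≤ ∫ t in Set.Ioi s, |deriv φ t| := abs_integral_le_integral_abs
    _ ≤ ∫ t, |deriv φ t| :=
        setIntegral_le_integral hint.abs (Filter.Eventually.of_forall fun _ => abs_nonneg _)

theorem HasCompactSupport.comp_add_smul {F X : Type*} [NormedAddCommGroup F] [NormedSpace ℝ F]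
    [Zero X] {v : F → X} (hv : HasCompactSupport v) (q : F) {e : F} (he : e ≠ 0) :
    HasCompactSupport fun t : ℝ => v (q + t • e) :=
  hv.comp_isClosedEmbedding ((Homeomorph.addLeft q).isClosedEmbedding.comp
    (isClosedEmbedding_smul_left he))

theorem abs_le_norm_mul_integral_norm_fderiv_line {F : Type*} [NormedAddCommGroup F]
    [NormedSpace ℝ F] {v : F → ℝ} (hv : ContDiff ℝ 1 v) (hcs : HasCompactSupport v)
    (q : F) {e : F} (he : e ≠ 0) (s : ℝ) :
    |v (q + s • e)| ≤ ‖e‖ * ∫ t : ℝ, ‖fderiv ℝ v (q + t • e)‖ := by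
  have hline : ContDiff ℝ 1 fun t : ℝ => q + t • e := by fun_prop
  have hderiv : ∀ t : ℝ, deriv (fun t => v (q + t • e)) t = fderiv ℝ v (q + t • e) e := by
    intro t
    have := ((hv.differentiable one_ne_zero) (q + t • e)).hasFDerivAt.comp_hasDerivAt t
      (((hasDerivAt_id t).smul_const e).const_add q)
    rw [one_smul] at this
    exact this.deriv
  have hgrad : Integrable fun t : ℝ => ‖fderiv ℝ v (q + t • e)‖ := by
    refine Continuous.integrable_of_hasCompactSupport ?_ ((hcs.fderiv ℝ).norm.comp_add_smul q he)
    exact ((hv.continuous_fderiv one_ne_zero).comp hline.continuous).norm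
  calc |v (q + s • e)| ≤ ∫ t, |deriv (fun t => v (q + t • e)) t| :=
        abs_le_integral_abs_deriv (hv.comp hline) (hcs.comp_add_smul q he) s
    _ ≤ ∫ t, ‖e‖ * ‖fderiv ℝ v (q + t • e)‖ := by
        refine integral_mono_of_nonneg (Filter.Eventually.of_forall fun _ => abs_nonneg _)
          (hgrad.const_mul _) (Filter.Eventually.of_forall fun t => ?_)
        dsimp only
        rw [hderiv, mul_comm, ← Real.norm_eq_abs]
        exact (fderiv ℝ v (q + t • e)).le_opNorm e
    _ = ‖e‖ * ∫ t, ‖fderiv ℝ v (q + t • e)‖ := integral_const_mul _ _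

theorem mul_le_integral_prod_of_le_integral_slice {α β : Type*} [MeasurableSpace α]
    [MeasurableSpace β] {μ : Measure α} {ν : Measure β} [SFinite μ] [SFinite ν]
    {G : α × β → ℝ} (hG : Integrable G (μ.prod ν)) (hG0 : ∀ p, 0 ≤ G p) {s : Set α}
    (hs : MeasurableSet s) (hμs : μ s ≠ ⊤) {c : ℝ} (hc : ∀ a ∈ s, c ≤ ∫ b, G (a, b) ∂ν) :
    μ.real s * c ≤ ∫ p, G p ∂μ.prod ν := by
  calc μ.real s * c = ∫ _ in s, c ∂μ := by rw [setIntegral_const, smul_eq_mul]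
    _ ≤ ∫ a in s, ∫ b, G (a, b) ∂ν ∂μ :=
        setIntegral_mono_on (integrableOn_const hμs) hG.integral_prod_left.integrableOn hs hc
    _ ≤ ∫ a, ∫ b, G (a, b) ∂ν ∂μ :=
        setIntegral_le_integral hG.integral_prod_left
          (Filter.Eventually.of_forall fun _ => integral_nonneg fun _ => hG0 _)
    _ = ∫ p, G p ∂μ.prod ν := (integral_prod G hG).symm

def prodToEuclideanTwo : ℝ × ℝ ≃ᵐ E 2 :=
  MeasurableEquiv.finTwoArrow.symm.trans (MeasurableEquiv.toLp 2 (Fin 2 → ℝ))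

theorem measurePreserving_prodToEuclideanTwo :
    MeasurePreserving prodToEuclideanTwo (volume.prod volume) volume :=
  (PiLp.volume_preserving_toLp (Fin 2)).comp (volume_preserving_finTwoArrow ℝ).symm

theorem norm_vec_two (a b : ℝ) : ‖!₂[a, b]‖ = √(a ^ 2 + b ^ 2) := by
  simp [EuclideanSpace.norm_eq, Fin.sum_univ_two]

theorem isClosedEmbedding_prodMk {X Y : Type*} [TopologicalSpace X] [TopologicalSpace Y]
    [T1Space X] (x : X) : Topology.IsClosedEmbedding (Prod.mk x : Y → X × Y) := by
  refine ⟨isEmbedding_prodMkRight x, ?_⟩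
  convert (isClosed_singleton (x := x)).prod (isClosed_univ (X := Y)) using 1
  ext ⟨a, b⟩
  simp [eq_comm]

theorem norm_fderiv_prodMk_le {X Y G : Type*} [NormedAddCommGroup X] [NormedSpace ℝ X]
    [NormedAddCommGroup Y] [NormedSpace ℝ Y] [NormedAddCommGroup G] [NormedSpace ℝ G]
    {u : X × Y → G} {x : X} {y : Y} (hu : DifferentiableAt ℝ u (x, y)) :
    ‖fderiv ℝ (fun y => u (x, y)) y‖ ≤ ‖fderiv ℝ u (x, y)‖ := by
  change ‖fderiv ℝ (u ∘ Prod.mk x) y‖ ≤ _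
  rw [(hu.hasFDerivAt.comp y (hasFDerivAt_prodMk_right x y)).fderiv]
  calc _ ≤ ‖fderiv ℝ u (x, y)‖ * ‖ContinuousLinearMap.inr ℝ X Y‖ :=
        ContinuousLinearMap.opNorm_comp_le _ _
    _ ≤ ‖fderiv ℝ u (x, y)‖ :=
        mul_le_of_le_one_right (norm_nonneg _) (ContinuousLinearMap.norm_inr_le_one ℝ X Y)

theorem integral_norm_fderiv_prodMk_le_setIntegral_ball {X Y : Type*} [NormedAddCommGroup X]
    [NormedSpace ℝ X] [NormedAddCommGroup Y] [NormedSpace ℝ Y] [MeasurableSpace Y]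
    [BorelSpace Y] [ProperSpace Y] (μ : Measure Y) [IsFiniteMeasureOnCompacts μ]
    {u : X × Y → ℝ} (hu : ContDiff ℝ 1 u) (x : X) {c : Y} {R : ℝ}
    (hsupp : Prod.mk x ⁻¹' tsupport u ⊆ ball c R) :
    ∫ y, ‖fderiv ℝ (fun y => u (x, y)) y‖ ∂μ ≤ ∫ y in ball c R, ‖fderiv ℝ u (x, y)‖ ∂μ := by
  have hslice : ContDiff ℝ 1 fun y => u (x, y) := hu.comp (by fun_prop)
  have htsupport : tsupport (fun y => u (x, y)) ⊆ Prod.mk x ⁻¹' tsupport u :=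
    closure_minimal (fun y hy => subset_tsupport u hy)
      ((isClosed_tsupport u).preimage (by fun_prop))
  have hzero : ∀ y ∉ ball c R, ‖fderiv ℝ (fun y => u (x, y)) y‖ = 0 := fun y hy =>
    norm_eq_zero.2 <| Function.notMem_support.1 fun h =>
      hy (hsupp (htsupport (support_fderiv_subset ℝ h)))
  have hint : ∀ {g : Y → ℝ}, Continuous g → IntegrableOn g (ball c R) μ := fun hg =>
    (hg.locallyIntegrable.integrableOn_isCompact (isCompact_closedBall c R)).mono_set
      ball_subset_closedBall
  rw [← setIntegral_eq_integral_of_forall_compl_eq_zero hzero]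
  exact setIntegral_mono_on (hint (hslice.continuous_fderiv one_ne_zero).norm)
    (hint ((hu.continuous_fderiv one_ne_zero).comp (by fun_prop)).norm) measurableSet_ball
    fun y _ => norm_fderiv_prodMk_le (hu.differentiable one_ne_zero _)

theorem two_mul_norm_mul_abs_le_integral_norm_fderiv_of_radial {v : E 2 → ℝ}
    (hv : ContDiff ℝ 1 v) (hcs : HasCompactSupport v)
    (hrad : ∀ y z : E 2, ‖y‖ = ‖z‖ → v y = v z) (x : E 2) :
    2 * ‖x‖ * |v x| ≤ ∫ y, ‖fderiv ℝ v y‖ := by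
  set r := ‖x‖
  have hline : ∀ b t : ℝ, (!₂[b, t] : E 2) = !₂[b, 0] + t • !₂[0, 1] := fun b t => by
    ext i; fin_cases i <;> simp
  have hslice : ∀ b ∈ Set.Icc (-r) r, |v x| ≤ ∫ t, ‖fderiv ℝ v !₂[b, t]‖ := by
    intro b hb
    have hpt : r = ‖(!₂[b, √(r ^ 2 - b ^ 2)] : E 2)‖ := by
      rw [norm_vec_two, Real.sq_sqrt (by nlinarith [hb.1, hb.2]), add_sub_cancel,
        Real.sqrt_sq (norm_nonneg x)]
    have hunit : ‖(!₂[0, 1] : E 2)‖ = 1 := by simp [norm_vec_two]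
    have := abs_le_norm_mul_integral_norm_fderiv_line hv hcs !₂[b, 0]
      (ne_zero_of_norm_ne_zero (hunit.trans_ne one_ne_zero)) √(r ^ 2 - b ^ 2)
    rw [hunit, one_mul, ← hline] at this
    simpa only [← hline, ← hrad _ _ hpt] using this
  have hG : Integrable (fun p => ‖fderiv ℝ v (prodToEuclideanTwo p)‖) (volume.prod volume) :=
    (measurePreserving_prodToEuclideanTwo.integrable_comp_emb
      prodToEuclideanTwo.measurableEmbedding).2 <|
        (hv.continuous_fderiv one_ne_zero).norm.integrable_of_hasCompactSupport (hcs.fderiv ℝ).norm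
  calc 2 * r * |v x| = volume.real (Set.Icc (-r) r) * |v x| := by
        rw [Real.volume_real_Icc_of_le (by linarith [norm_nonneg x])]; ring
    _ ≤ ∫ p, ‖fderiv ℝ v (prodToEuclideanTwo p)‖ ∂(volume.prod volume) :=
        mul_le_integral_prod_of_le_integral_slice hG (fun _ => norm_nonneg _) measurableSet_Icc
          measure_Icc_lt_top.ne hslice
    _ = ∫ y, ‖fderiv ℝ v y‖ :=
        measurePreserving_prodToEuclideanTwo.integral_comp' fun y => ‖fderiv ℝ v y‖

/-- `H¹₀(Ω)` is represented by its dense subclass of `C¹` functions with compact support in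
`Ω = Ω₁ × Ω₂`. -/
theorem wang_pointwise_estimate_j_eq_two (m : ℕ) :
    ∃ A > 0, ∀ (Ω₁ : Set (E m)), IsOpen Ω₁ → IsBounded Ω₁ →
      ∀ R : ℝ, 0 < R →
      ∀ u : E m × E 2 → ℝ,
        ContDiff ℝ 1 u → HasCompactSupport u →
        tsupport u ⊆ Ω₁ ×ˢ ball (0 : E 2) R →
        (∀ (x₁ : E m) (x₂ y₂ : E 2), ‖x₂‖ = ‖y₂‖ → u (x₁, x₂) = u (x₁, y₂)) →
        ∀ (x₁ : E m) (x₂ : E 2), (x₁, x₂) ∈ Ω₁ ×ˢ ball (0 : E 2) R → x₂ ≠ 0 →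
          |u (x₁, x₂)| ≤ A / ‖x₂‖ ^ ((2 : ℝ) - 1) *
            ∫ y in ball (0 : E 2) R, ‖fderiv ℝ u (x₁, y)‖ := by
  refine ⟨1 / 2, by norm_num, ?_⟩
  intro Ω₁ _ _ R _ u hu hcs hsupp hrad x₁ x₂ _ hx₂
  have hradial := two_mul_norm_mul_abs_le_integral_norm_fderiv_of_radial
    (v := fun y => u (x₁, y)) (hu.comp (by fun_prop))
    (hcs.comp_isClosedEmbedding (isClosedEmbedding_prodMk x₁)) (hrad x₁) x₂
  have hslice := integral_norm_fderiv_prodMk_le_setIntegral_ball volume hu x₁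
    (fun y hy => (hsupp hy).2)
  rw [show (2 : ℝ) - 1 = 1 by norm_num, Real.rpow_one, div_mul_eq_mul_div,
    le_div_iff₀ (norm_pos_iff.2 hx₂)]
  linarith
end
end
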